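/- If two reduced polynomial resolutions G = (G_l,...,G_1) and G' = (G'_l,...,G'_1) of convolutional codes are equivalent via filtered-module isomorphisms U_i : S^{p_i}[-a_i] → S^{p'_i}[-a'_i] (with G'_1 U_1 = G_1, G'_{i+1} U_{i+1} = U_i G_{i+1}), then they have the same size (p_i = p'_i for all i) and the same column degree table (a_i = a'_i up to permutation, for each i). -/

import Mathlib

open MvPolynomial

noncomputable section
open scoped Classical

/-- Polynomials of total degree at most `d`. -/
def polyDegLE (F : Type) [Field F] (n : ℕ) (d : ℤ) :
    Submodule F (MvPolynomial (Fin n) F) where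
  carrier := {f | ∀ m ∈ f.support, ((m.sum fun _ e => e : ℕ) : ℤ) ≤ d}
  add_mem' := fun hf hg m hm =>
    (Finset.mem_union.1 (MvPolynomial.support_add hm)).elim (hf m) (hg m)
  zero_mem' := by simp
  smul_mem' := fun c f hf m hm => hf m (MvPolynomial.support_smul hm)

/-- The filtration `S^p[-a]_{≤ d}`. -/
def filt (F : Type) [Field F] (n p : ℕ) (a : Fin p → ℕ) (d : ℤ) :
    Submodule F (Fin p → MvPolynomial (Fin n) F) :=
  Submodule.pi Set.univ fun i => polyDegLE F n (d - a i)

/-- `C_{≤d} = C ∩ S^q_{≤d}`, as an `F`-subspace of `S^q`. -/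
def codeLE (F : Type) [Field F] (n q : ℕ)
    (C : Submodule (MvPolynomial (Fin n) F) (Fin q → MvPolynomial (Fin n) F))
    (d : ℤ) : Submodule F (Fin q → MvPolynomial (Fin n) F) :=
  (C.restrictScalars F) ⊓ filt F n q (fun _ => 0) d

/-- The `a`-degree of the `j`-th column of a matrix `G` with no zero columns:
`deg_a(G_{·j}) = max_i (a i + deg (G i j))`, the maximum ranging over the nonzero
entries of the column. -/
def colDeg {F : Type} [Field F] {n p r : ℕ} (a : Fin p → ℕ)
    (G : Matrix (Fin p) (Fin r) (MvPolynomial (Fin n) F)) (j : Fin r) : ℕ :=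
  Finset.univ.sup fun i => if G i j = 0 then 0 else a i + (G i j).totalDegree


/-!
A filtered isomorphism `S^p[-a] ≅ S^{p'}[-a']` restricts to `F`-linear isomorphisms
between the finite-dimensional pieces of degree `≤ d`, so `∑ᵢ N(d - aᵢ) = ∑ᵢ N(d - a'ᵢ)` for
every `d`, where `N m` is the dimension of the space of polynomials of degree `≤ m`. Since
`N m = 0` for `m < 0` and `N 0 = 1`, evaluating at `d = t` determines the number of `aᵢ` equal
to `t` from those equal to smaller values; by induction on `t` the tables `a` and `a'` have the
same multiplicities, hence agree up to a permutation.
-/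

namespace Submodule

variable {R ι : Type*} [Semiring R] {φ : ι → Type*} [∀ i, AddCommMonoid (φ i)]
  [∀ i, Module R (φ i)]

def piUnivEquiv (q : ∀ i, Submodule R (φ i)) : pi Set.univ q ≃ₗ[R] ∀ i, q i where
  toFun x i := ⟨x.1 i, x.2 i (Set.mem_univ i)⟩
  map_add' _ _ := rfl
  map_smul' _ _ := rfl
  invFun y := ⟨fun i => y i, fun i _ => (y i).2⟩
  left_inv _ := rfl
  right_inv _ := rfl

end Submodule

theorem LinearEquiv.finrank_eq_of_mapsTo {K M M' : Type*} [Ring K] [AddCommGroup M] [Module K M]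
    [AddCommGroup M'] [Module K M'] (e : M ≃ₗ[K] M') {P : Submodule K M} {P' : Submodule K M'}
    (h : ∀ x ∈ P, e x ∈ P') (h' : ∀ y ∈ P', e.symm y ∈ P) :
    Module.finrank K P = Module.finrank K P' := by
  have hmap : P.map (e : M →ₗ[K] M') = P' :=
    le_antisymm (Submodule.map_le_iff_le_comap.2 h)
      fun y hy => ⟨e.symm y, h' y hy, e.apply_symm_apply y⟩
  rw [← hmap, LinearEquiv.finrank_map_eq]

section Counting

open Finset

variable {ι ι' : Type*} [Fintype ι] [Fintype ι'] (N : ℤ → ℕ)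

theorem sum_sub_eq_sum_range_card_fiber_mul (hN : ∀ m < 0, N m = 0) (c : ι → ℕ) (t : ℕ) :
    ∑ i, N (t - c i) = ∑ s ∈ range (t + 1), #{i | c i = s} * N (t - s) := by
  calc ∑ i, N (t - c i) = ∑ i with c i ∈ range (t + 1), N (t - c i) := by
        refine (sum_filter_of_ne fun i _ hi => mem_range.2 ?_).symm
        by_contra hlt
        exact hi (hN _ (by omega))
    _ = ∑ s ∈ range (t + 1), ∑ i with c i = s, N (t - s) :=
        (sum_fiberwise_eq_sum_filter' univ (range (t + 1)) c fun s : ℕ => N (t - s)).symm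
    _ = _ := by simp only [sum_const, smul_eq_mul]

theorem card_fiber_eq_of_sum_sub_eq (hN0 : N 0 ≠ 0) (hN : ∀ m < 0, N m = 0) {c : ι → ℕ}
    {c' : ι' → ℕ} (H : ∀ d : ℤ, ∑ i, N (d - c i) = ∑ i, N (d - c' i)) (t : ℕ) :
    #{i | c i = t} = #{i | c' i = t} := by
  induction t using Nat.strong_induction_on with
  | _ t IH =>
    have key := H t
    rw [sum_sub_eq_sum_range_card_fiber_mul N hN, sum_sub_eq_sum_range_card_fiber_mul N hN,
      sum_range_succ, sum_range_succ,
      sum_congr rfl fun s hs => by rw [IH s (mem_range.1 hs)], sub_self, add_left_cancel_iff] at key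
    exact Nat.eq_of_mul_eq_mul_right (Nat.pos_of_ne_zero hN0) key

theorem exists_equiv_of_card_fiber_eq {γ : Type*} [DecidableEq γ] {c : ι → γ} {c' : ι' → γ}
    (H : ∀ t, #{i | c i = t} = #{i | c' i = t}) : ∃ σ : ι ≃ ι', ∀ j, c' (σ j) = c j := by
  have hcard (t : γ) : Fintype.card {i // c i = t} = Fintype.card {i // c' i = t} := by
    rw [Fintype.card_subtype, Fintype.card_subtype, H t]
  let e (t : γ) := Fintype.equivOfCardEq (hcard t)
  exact ⟨Equiv.ofFiberEquiv e, Equiv.ofFiberEquiv_map e⟩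

end Counting

section Filtration

variable (F : Type) [Field F] (n : ℕ)

theorem polyDegLE_eq_bot_of_neg {d : ℤ} (hd : d < 0) : polyDegLE F n d = ⊥ := by
  refine eq_bot_iff.2 fun f hf => (Submodule.mem_bot F).2 <| support_eq_empty.1 <|
    Finset.eq_empty_of_forall_notMem fun m hm => ?_
  have := hf m hm
  omega

theorem polyDegLE_natCast (k : ℕ) :
    polyDegLE F n k = restrictTotalDegree (Fin n) F k := by
  ext f
  rw [mem_restrictTotalDegree, totalDegree, Finset.sup_le_iff]
  exact forall₂_congr fun _ _ => Int.ofNat_le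

instance (d : ℤ) : Module.Finite F (polyDegLE F n d) := by
  rcases lt_or_ge d 0 with hd | hd
  · rw [polyDegLE_eq_bot_of_neg F n hd]
    infer_instance
  · lift d to ℕ using hd
    rw [polyDegLE_natCast]
    infer_instance

theorem finrank_polyDegLE_zero_ne_zero : Module.finrank F (polyDegLE F n 0) ≠ 0 := by
  refine (Submodule.finrank_eq_zero.not).2 fun h => one_ne_zero (α := MvPolynomial (Fin n) F) ?_
  rw [← Submodule.mem_bot F, ← h, ← Nat.cast_zero, polyDegLE_natCast, mem_restrictTotalDegree,
    totalDegree_one]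

theorem finrank_filt (p : ℕ) (a : Fin p → ℕ) (d : ℤ) :
    Module.finrank F (filt F n p a d) = ∑ i, Module.finrank F (polyDegLE F n (d - a i)) :=
  ((Submodule.piUnivEquiv _).finrank_eq).trans (Module.finrank_pi_fintype F)

/-- Lemma 1 of the paper. -/
theorem exists_equiv_of_filt_linearEquiv {p p' : ℕ} {a : Fin p → ℕ} {a' : Fin p' → ℕ}
    (U : (Fin p → MvPolynomial (Fin n) F) ≃ₗ[F] (Fin p' → MvPolynomial (Fin n) F))
    (hU : ∀ d, ∀ f ∈ filt F n p a d, U f ∈ filt F n p' a' d)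
    (hU' : ∀ d, ∀ g ∈ filt F n p' a' d, U.symm g ∈ filt F n p a d) :
    p = p' ∧ ∃ σ : Fin p ≃ Fin p', ∀ j, a' (σ j) = a j := by
  set N : ℤ → ℕ := fun m => Module.finrank F (polyDegLE F n m)
  have hN : ∀ m < 0, N m = 0 := fun m hm =>
    Submodule.finrank_eq_zero.2 (polyDegLE_eq_bot_of_neg F n hm)
  have hsum (d : ℤ) : ∑ i, N (d - a i) = ∑ i, N (d - a' i) := by
    rw [← finrank_filt, ← finrank_filt]
    exact U.finrank_eq_of_mapsTo (hU d) (hU' d)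
  obtain ⟨σ, hσ⟩ := exists_equiv_of_card_fiber_eq
    (card_fiber_eq_of_sum_sub_eq N (finrank_polyDegLE_zero_ne_zero F n) hN hsum)
  exact ⟨by simpa using Fintype.card_congr σ, σ, hσ⟩

end Filtration

/-- if two polynomial resolutions `(G_l,…,G_1)` and `(G'_l,…,G'_1)`
(with column degree tables `(a_l,…,a_1)`, `(a'_l,…,a'_1)` and no zero columns) are
equivalent via filtered-module isomorphisms `U_i : S^{p_i}[-a_i] ≅ S^{p'_i}[-a'_i]`
satisfying `G'_1 U_1 = G_1` and `G'_{i+1} U_{i+1} = U_i G_{i+1}`, then they have the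
same size (`p_i = p'_i`) and the same column degree table (`a_i = a'_i` up to a
permutation, for each `i`). -/
theorem equivalent_resolutions_same_size_and_degrees (F : Type) [Field F] (n : ℕ)
    (l : ℕ) (p p' : ℕ → ℕ)
    (a : ∀ i : ℕ, Fin (p i) → ℕ) (a' : ∀ i : ℕ, Fin (p' i) → ℕ)
    -- the equivalence: filtered isomorphisms `U_i`, `i = 1, …, l`
    (U : ∀ i : ℕ, i + 1 ≤ l →
      ((Fin (p (i+1)) → MvPolynomial (Fin n) F) ≃ₗ[MvPolynomial (Fin n) F]
        (Fin (p' (i+1)) → MvPolynomial (Fin n) F)))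
    (hUfilt : ∀ i (h : i + 1 ≤ l) (d : ℤ),
      ∀ f ∈ filt F n (p (i+1)) (a (i+1)) d,
        U i h f ∈ filt F n (p' (i+1)) (a' (i+1)) d)
    (hUfilt' : ∀ i (h : i + 1 ≤ l) (d : ℤ),
      ∀ g ∈ filt F n (p' (i+1)) (a' (i+1)) d,
        (U i h).symm g ∈ filt F n (p (i+1)) (a (i+1)) d) :
    ∀ i, i + 1 ≤ l →
      p (i+1) = p' (i+1) ∧
      ∃ σ : Fin (p (i+1)) ≃ Fin (p' (i+1)), ∀ j, a' (i+1) (σ j) = a (i+1) j :=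
  fun i hi => exists_equiv_of_filt_linearEquiv F n ((U i hi).restrictScalars F)
    (hUfilt i hi) (hUfilt' i hi)
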